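/- arXiv:1304.5220 — 7 statements merged into one kernel-verified Lean document; each statement's English description precedes it below -/
import Mathlib

section
/- Existence of a balanced subfamily: let P_e ∈ (0,1) and ε ∈ (0,1), and let U = F₂^K \ {0}. If d_min > ln(P_e/8)/ln ε and μ_ε(∪_{u∈U} E_u) > P_e, then there exists a subset U₁ ⊆ U such that (3/8)·μ_ε(∪_{u∈U} E_u) ≤ μ_ε(∪_{u∈U₁} E_u) ≤ (1/2)·μ_ε(∪_{u∈U} E_u). -/
noncomputable def prodMeas {N : ℕ} (ε : ℝ) (S : Set (Fin N → Bool)) : ℝ :=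
  ∑ y : Fin N → Bool,
    Set.indicator S (fun y => ∏ i, (if y i = true then ε else 1 - ε)) y

def Iu {K N : ℕ} (G : Matrix (Fin K) (Fin N) (ZMod 2)) (u : Fin K → ZMod 2) :
    Finset (Fin N) :=
  Finset.univ.filter (fun i => Matrix.vecMul u G i = 1)

def Eu {K N : ℕ} (G : Matrix (Fin K) (Fin N) (ZMod 2)) (u : Fin K → ZMod 2) :
    Set (Fin N → Bool) :=
  {y | ∀ i ∈ Iu G u, y i = true}

section aux
variable {N : ℕ} {ε : ℝ}

lemma w_nonneg (hε0 : 0 ≤ ε) (hε1 : ε ≤ 1) (y : Fin N → Bool) :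
    0 ≤ ∏ i, (if y i = true then ε else 1 - ε) :=
  Finset.prod_nonneg fun i _ => by split <;> linarith

lemma prodMeas_mono (hε0 : 0 ≤ ε) (hε1 : ε ≤ 1) {S T : Set (Fin N → Bool)} (h : S ⊆ T) :
    prodMeas ε S ≤ prodMeas ε T :=
  Finset.sum_le_sum fun y _ =>
    Set.indicator_le_indicator_of_subset h (fun a => w_nonneg hε0 hε1 a) y

lemma prodMeas_empty : prodMeas ε (∅ : Set (Fin N → Bool)) = 0 := by
  simp [prodMeas]

lemma prodMeas_union_le (hε0 : 0 ≤ ε) (hε1 : ε ≤ 1) (S T : Set (Fin N → Bool)) :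
    prodMeas ε (S ∪ T) ≤ prodMeas ε S + prodMeas ε T := by
  rw [prodMeas, prodMeas, prodMeas, ← Finset.sum_add_distrib]
  refine Finset.sum_le_sum fun y _ => ?_
  by_cases hy : y ∈ S ∪ T
  · rw [Set.indicator_of_mem hy]
    rcases hy with hy | hy
    · rw [Set.indicator_of_mem hy]
      exact le_add_of_nonneg_right (Set.indicator_nonneg (fun a _ => w_nonneg hε0 hε1 a) y)
    · rw [Set.indicator_of_mem (s := T) hy]
      exact le_add_of_nonneg_left (Set.indicator_nonneg (fun a _ => w_nonneg hε0 hε1 a) y)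
  · rw [Set.indicator_of_notMem hy]
    exact add_nonneg (Set.indicator_nonneg (fun a _ => w_nonneg hε0 hε1 a) y)
      (Set.indicator_nonneg (fun a _ => w_nonneg hε0 hε1 a) y)

lemma prodMeas_Eu {K : ℕ} (G : Matrix (Fin K) (Fin N) (ZMod 2)) (u : Fin K → ZMod 2) :
    prodMeas ε (Eu G u) = ε ^ (Iu G u).card := by
  set I := Iu G u
  have key : ∀ y : Fin N → Bool,
      Set.indicator (Eu G u) (fun y => ∏ i, (if y i = true then ε else 1 - ε)) y
        = ∏ i, (if i ∈ I then (if y i = true then ε else 0)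
            else (if y i = true then ε else 1 - ε)) := by
    intro y
    by_cases hy : y ∈ Eu G u
    · rw [Set.indicator_of_mem hy]
      refine Finset.prod_congr rfl fun i _ => ?_
      by_cases hi : i ∈ I
      · simp [hi, hy i hi]
      · simp [hi]
    · rw [Set.indicator_of_notMem hy]
      obtain ⟨i, hi, hyi⟩ : ∃ i ∈ I, y i ≠ true := by
        simpa [Eu] using hy
      exact (Finset.prod_eq_zero (Finset.mem_univ i) (by simp [hi, hyi])).symm
  rw [prodMeas]
  simp only [key]
  have := (Finset.prod_univ_sum (fun _ : Fin N => (Finset.univ : Finset Bool))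
    (fun i b => if i ∈ I then (if b = true then ε else 0)
      else (if b = true then ε else 1 - ε))).symm
  rw [show (Fintype.piFinset fun _ : Fin N => (Finset.univ : Finset Bool)) = Finset.univ by
        ext; simp] at this
  rw [this]
  have : ∀ i : Fin N, (∑ b : Bool, if i ∈ I then (if b = true then ε else 0)
      else (if b = true then ε else 1 - ε)) = if i ∈ I then ε else 1 := by
    intro i
    by_cases hi : i ∈ I <;> simp [hi, Fintype.sum_bool] <;> ring
  simp only [this]
  rw [Finset.prod_ite_mem, Finset.univ_inter, Finset.prod_const]

end aux

set_option maxHeartbeats 4000000 in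
/-- Existence of a balanced subfamily of nonzero messages. -/
theorem exists_balanced_subfamily (K N : ℕ) (G : Matrix (Fin K) (Fin N) (ZMod 2))
    (ε : ℝ) (hε0 : 0 < ε) (hε1 : ε < 1) (Pe : ℝ) (hPe0 : 0 < Pe) (hPe1 : Pe < 1)
    (hdmin : ∀ u : Fin K → ZMod 2, u ≠ 0 →
      Real.log (Pe / 8) / Real.log ε < ((Iu G u).card : ℝ))
    (hbig : prodMeas ε (⋃ u ∈ {u : Fin K → ZMod 2 | u ≠ 0}, Eu G u) > Pe) :
    ∃ U₁ ⊆ {u : Fin K → ZMod 2 | u ≠ 0},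
      3 / 8 * prodMeas ε (⋃ u ∈ {u : Fin K → ZMod 2 | u ≠ 0}, Eu G u)
          ≤ prodMeas ε (⋃ u ∈ U₁, Eu G u) ∧
      prodMeas ε (⋃ u ∈ U₁, Eu G u)
          ≤ 1 / 2 * prodMeas ε (⋃ u ∈ {u : Fin K → ZMod 2 | u ≠ 0}, Eu G u) := by
  classical
  set M := prodMeas ε (⋃ u ∈ {u : Fin K → ZMod 2 | u ≠ 0}, Eu G u) with hM
  have hM0 : 0 < M := hPe0.trans hbig
  -- each individual event is small
  have hsmall : ∀ u : Fin K → ZMod 2, u ≠ 0 → prodMeas ε (Eu G u) < M / 8 := by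
    intro u hu
    rw [prodMeas_Eu]
    have hlogε : Real.log ε < 0 := Real.log_neg hε0 hε1
    have h1 : ((Iu G u).card : ℝ) * Real.log ε < Real.log (Pe / 8) :=
      (div_lt_iff_of_neg hlogε).mp (hdmin u hu)
    have h2 : ε ^ (Iu G u).card < Pe / 8 := by
      have : Real.log (ε ^ (Iu G u).card) < Real.log (Pe / 8) := by
        rw [Real.log_pow]; exact_mod_cast h1
      have hp : (0:ℝ) < ε ^ (Iu G u).card := pow_pos hε0 _
      exact (Real.log_lt_log_iff hp (by positivity)).mp this
    linarith
  -- the finset of nonzero messages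
  set T : Finset (Fin K → ZMod 2) := Finset.univ.filter (· ≠ 0) with hT
  have hTset : ⋃ u ∈ {u : Fin K → ZMod 2 | u ≠ 0}, Eu G u = ⋃ u ∈ (T : Set _), Eu G u := by
    congr 1
    ext u
    simp [hT]
  have hfT : prodMeas ε (⋃ u ∈ ((T : Finset _) : Set _), Eu G u) = M := by rw [hM, hTset]
  -- maximal small subset
  set cands : Finset (Finset (Fin K → ZMod 2)) :=
    T.powerset.filter
      (fun S => prodMeas ε (⋃ u ∈ (S : Set _), Eu G u) ≤ 1 / 2 * M) with hcands
  have hne : cands.Nonempty := by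
    refine ⟨∅, ?_⟩
    simp only [hcands, Finset.mem_filter, Finset.mem_powerset]
    refine ⟨Finset.empty_subset _, ?_⟩
    have h0 : (⋃ u ∈ (((∅ : Finset (Fin K → ZMod 2))) : Set _), Eu G u) = ∅ := by simp
    rw [h0, prodMeas_empty]; nlinarith
  obtain ⟨S, hScand, hSmax⟩ := cands.exists_max_image (fun S => S.card) hne
  simp only [hcands, Finset.mem_filter, Finset.mem_powerset] at hScand
  obtain ⟨hST, hShalf⟩ := hScand
  refine ⟨(S : Set _), ?_, ?_, ?_⟩
  · intro u hu
    exact (Finset.mem_filter.mp (hST hu)).2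
  swap
  · exact hShalf
  -- lower bound
  by_contra hlow
  push_neg at hlow
  have hSneT : S ≠ T := by
    intro h
    rw [h, hfT] at hShalf
    linarith
  obtain ⟨u, huT, huS⟩ := Finset.exists_of_ssubset (hST.ssubset_of_ne hSneT)
  have hu0 : u ≠ 0 := (Finset.mem_filter.mp huT).2
  have hstep : prodMeas ε (⋃ v ∈ ((insert u S : Finset _) : Set _), Eu G v)
      ≤ prodMeas ε (⋃ v ∈ (S : Set _), Eu G v) + prodMeas ε (Eu G u) := by
    have heq : ⋃ v ∈ ((insert u S : Finset _) : Set _), Eu G v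
        = Eu G u ∪ ⋃ v ∈ (S : Set _), Eu G v := by
      simp [Set.biUnion_insert]
    rw [heq]
    calc prodMeas ε (Eu G u ∪ ⋃ v ∈ (S : Set _), Eu G v)
        ≤ prodMeas ε (Eu G u) + prodMeas ε (⋃ v ∈ (S : Set _), Eu G v) :=
          prodMeas_union_le hε0.le hε1.le _ _
      _ = prodMeas ε (⋃ v ∈ (S : Set _), Eu G v) + prodMeas ε (Eu G u) := by ring
  have hnew : prodMeas ε (⋃ v ∈ ((insert u S : Finset _) : Set _), Eu G v) ≤ 1 / 2 * M := by
    have h8 := hsmall u hu0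
    linarith [hstep, hlow]
  have hmem : insert u S ∈ cands := by
    simp only [hcands, Finset.mem_filter, Finset.mem_powerset]
    exact ⟨Finset.insert_subset huT hST, hnew⟩
  have := hSmax _ hmem
  rw [Finset.card_insert_of_notMem huS] at this
  omega
end

section
/- Divide-and-Intersect bound for a general binary-input memoryless channel: let P_e ∈ (0,1), suppose the Bhattacharyya parameter satisfies Z ∈ (0,1), and let L ≥ 1. If d_min > ln(P_e/8)/ln Z and P_L > P_e, then P_{L+1} ≥ (3/16) · P_L². -/
/-- The product measure on `Fin N → Y` whose coordinates are i.i.d. with law `p0`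
(the channel output distribution when the all-zero codeword is sent). -/
noncomputable def nuMeas {Y : Type} [Fintype Y] {N : ℕ} (p0 : Y → ℝ)
    (S : Set (Fin N → Y)) : ℝ :=
  ∑ y : Fin N → Y, Set.indicator S (fun y => ∏ i, p0 (y i)) y

/-- `E'_u`: the event that the likelihood of message `u` given `y` is at least
that of the all-zero message. -/
def Eu' {Y : Type} {K N : ℕ} (G : Matrix (Fin K) (Fin N) (ZMod 2))
    (p0 p1 : Y → ℝ) (u : Fin K → ZMod 2) : Set (Fin N → Y) :=
  {y | ∏ i ∈ Iu G u, p0 (y i) ≤ ∏ i ∈ Iu G u, p1 (y i)}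

/-- `E'_T`: the event that every message in the finite set `T` is at least as
likely as the all-zero message. -/
def EuT' {Y : Type} {K N : ℕ} (G : Matrix (Fin K) (Fin N) (ZMod 2))
    (p0 p1 : Y → ℝ) (T : Finset (Fin K → ZMod 2)) : Set (Fin N → Y) :=
  ⋂ u ∈ T, Eu' G p0 p1 u

/-- `P_L`: the probability that at least `L` distinct nonzero messages are each
at least as likely as the all-zero message (the list-`L` MAP block error
probability for output-symmetric channels). -/
noncomputable def PL {Y : Type} [Fintype Y] {K N : ℕ}
    (G : Matrix (Fin K) (Fin N) (ZMod 2)) (p0 p1 : Y → ℝ) (L : ℕ) : ℝ :=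
  nuMeas p0 (⋃ (T : Finset (Fin K → ZMod 2))
    (_ : T.card = L ∧ ∀ u ∈ T, u ≠ 0), EuT' G p0 p1 T)

section DIaux

open Finset

set_option linter.unusedSectionVars false

variable {Y : Type} [Fintype Y] {N : ℕ}

private lemma prodW_nonneg (p0 : Y → ℝ) (hp0 : ∀ y, 0 ≤ p0 y) (y : Fin N → Y) :
    0 ≤ ∏ i, p0 (y i) :=
  Finset.prod_nonneg fun _ _ => hp0 _

private lemma nuMeas_nonneg (p0 : Y → ℝ) (hp0 : ∀ y, 0 ≤ p0 y) (S : Set (Fin N → Y)) :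
    0 ≤ nuMeas p0 S :=
  Finset.sum_nonneg fun y _ => Set.indicator_nonneg (fun z _ => prodW_nonneg p0 hp0 z) y

private lemma nuMeas_mono (p0 : Y → ℝ) (hp0 : ∀ y, 0 ≤ p0 y) {S T : Set (Fin N → Y)}
    (h : S ⊆ T) : nuMeas p0 S ≤ nuMeas p0 T :=
  Finset.sum_le_sum fun y _ =>
    Set.indicator_le_indicator_of_subset h (fun z => prodW_nonneg p0 hp0 z) y

private lemma nuMeas_empty (p0 : Y → ℝ) : nuMeas p0 (∅ : Set (Fin N → Y)) = 0 := by
  simp [nuMeas]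

private lemma nuMeas_union_le (p0 : Y → ℝ) (hp0 : ∀ y, 0 ≤ p0 y) (S T : Set (Fin N → Y)) :
    nuMeas p0 (S ∪ T) ≤ nuMeas p0 S + nuMeas p0 T := by
  classical
  unfold nuMeas
  rw [← Finset.sum_add_distrib]
  refine Finset.sum_le_sum fun y _ => ?_
  have hW := prodW_nonneg p0 hp0 y
  by_cases hS : y ∈ S <;> by_cases hT : y ∈ T <;>
    simp [Set.indicator_apply, hS, hT] <;> linarith

private lemma greedy {ι : Type*} [DecidableEq ι] (p0 : Y → ℝ) (hp0 : ∀ y, 0 ≤ p0 y)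
    (E : ι → Set (Fin N → Y)) (ε c : ℝ) (hc : 0 ≤ c) (hε : 0 ≤ ε) :
    ∀ A : Finset ι, (∀ a ∈ A, nuMeas p0 (E a) ≤ ε) →
      c ≤ nuMeas p0 (⋃ a ∈ A, E a) →
      ∃ B ⊆ A, c ≤ nuMeas p0 (⋃ a ∈ B, E a) ∧ nuMeas p0 (⋃ a ∈ B, E a) ≤ c + ε := by
  intro A
  induction A using Finset.strongInduction with
  | _ A ih =>
    intro hA hcA
    by_cases hbig : nuMeas p0 (⋃ a ∈ A, E a) ≤ c + ε
    · exact ⟨A, le_refl _, hcA, hbig⟩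
    · push_neg at hbig
      have hAne : A.Nonempty := by
        rcases A.eq_empty_or_nonempty with rfl | h
        · exfalso
          have he : (⋃ a ∈ (∅ : Finset ι), E a) = (∅ : Set (Fin N → Y)) := by simp
          rw [he, nuMeas_empty] at hbig
          linarith
        · exact h
      obtain ⟨a, ha⟩ := hAne
      have hsub : (⋃ b ∈ A, E b) ⊆ (⋃ b ∈ A.erase a, E b) ∪ E a := by
        intro y hy
        simp only [Set.mem_iUnion, Set.mem_union, Finset.mem_erase] at hy ⊢
        obtain ⟨b, hb, hyb⟩ := hy
        by_cases hba : b = a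
        · exact Or.inr (hba ▸ hyb)
        · exact Or.inl ⟨b, ⟨hba, hb⟩, hyb⟩
      have h2 : c ≤ nuMeas p0 (⋃ b ∈ A.erase a, E b) := by
        have h3 := (nuMeas_mono p0 hp0 hsub).trans
          (nuMeas_union_le p0 hp0 (⋃ b ∈ A.erase a, E b) (E a))
        have h4 := hA a ha
        linarith
      obtain ⟨B, hBsub, h5, h6⟩ := ih (A.erase a) (Finset.erase_ssubset ha)
        (fun b hb => hA b (Finset.mem_of_mem_erase hb)) h2
      exact ⟨B, hBsub.trans (Finset.erase_subset _ _), h5, h6⟩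

private lemma cheb (w : Y → ℝ) (hw : ∀ a, 0 ≤ w a) (F G : Y → ℝ)
    (h : ∀ a b, 0 ≤ (F a - F b) * (G a - G b)) :
    (∑ a, w a * F a) * (∑ a, w a * G a) ≤ (∑ a, w a) * ∑ a, w a * (F a * G a) := by
  have key : (0:ℝ) ≤ ∑ a : Y, ∑ b : Y, w a * w b * ((F a - F b) * (G a - G b)) :=
    Finset.sum_nonneg fun a _ => Finset.sum_nonneg fun b _ =>
      mul_nonneg (mul_nonneg (hw a) (hw b)) (h a b)
  have expand : ∑ a : Y, ∑ b : Y, w a * w b * ((F a - F b) * (G a - G b))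
      = (∑ a, w a * (F a * G a)) * (∑ a, w a)
        + (∑ a, w a) * (∑ a, w a * (F a * G a))
        - (∑ a, w a * F a) * (∑ a, w a * G a)
        - (∑ a, w a * G a) * (∑ a, w a * F a) := by
    have hterm : ∀ a b : Y, w a * w b * ((F a - F b) * (G a - G b))
        = (w a * (F a * G a)) * w b + w a * (w b * (F b * G b))
          - (w a * F a) * (w b * G b) - (w a * G a) * (w b * F b) := fun a b => by ring
    simp_rw [hterm, Finset.sum_sub_distrib, Finset.sum_add_distrib, ← Finset.mul_sum,
      ← Finset.sum_mul]
  rw [expand] at key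
  nlinarith [key]

private lemma harris (w : Y → ℝ) (hw : ∀ a, 0 ≤ w a) (hw1 : ∑ a, w a = 1) (x : Y → ℝ) :
    ∀ (n : ℕ) (f g : (Fin n → Y) → ℝ),
      (∀ y y' : Fin n → Y, (∀ i, x (y i) ≤ x (y' i)) → f y ≤ f y') →
      (∀ y y' : Fin n → Y, (∀ i, x (y i) ≤ x (y' i)) → g y ≤ g y') →
      (∑ y : Fin n → Y, (∏ i, w (y i)) * f y) * (∑ y : Fin n → Y, (∏ i, w (y i)) * g y)
        ≤ ∑ y : Fin n → Y, (∏ i, w (y i)) * (f y * g y) := by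
  intro n
  induction n with
  | zero =>
    intro f g _ _
    simp [Fintype.sum_unique]
  | succ n ih =>
    intro f g hf hg
    have reidx : ∀ h : (Fin (n+1) → Y) → ℝ,
        (∑ y : Fin (n+1) → Y, (∏ i, w (y i)) * h y)
          = ∑ t : Y, w t * ∑ z : Fin n → Y, (∏ i, w (z i)) * h (Fin.cons t z) := by
      intro h
      rw [← Equiv.sum_comp (Fin.consEquiv (fun _ : Fin (n+1) => Y))
        (fun y => (∏ i, w (y i)) * h y), Fintype.sum_prod_type]
      refine Finset.sum_congr rfl fun t _ => ?_
      rw [Finset.mul_sum]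
      refine Finset.sum_congr rfl fun z _ => ?_
      have he : (Fin.consEquiv (fun _ : Fin (n+1) => Y)) (t, z) = Fin.cons t z := rfl
      rw [he, Fin.prod_univ_succ]
      simp [mul_assoc]
    rw [reidx f, reidx g, reidx (fun y => f y * g y)]
    set F : Y → ℝ := fun t => ∑ z : Fin n → Y, (∏ i, w (z i)) * f (Fin.cons t z) with hF
    set G' : Y → ℝ := fun t => ∑ z : Fin n → Y, (∏ i, w (z i)) * g (Fin.cons t z) with hG'
    have hcons : ∀ (a b : Y) (z z' : Fin n → Y), x a ≤ x b → (∀ i, x (z i) ≤ x (z' i)) →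
        ∀ i, x ((Fin.cons a z : Fin (n+1) → Y) i) ≤ x ((Fin.cons b z' : Fin (n+1) → Y) i) := by
      intro a b z z' hab hzz i
      refine Fin.cases ?_ ?_ i
      · simpa using hab
      · intro j; simpa using hzz j
    have hIH : ∀ t, F t * G' t ≤ ∑ z : Fin n → Y,
        (∏ i, w (z i)) * (f (Fin.cons t z) * g (Fin.cons t z)) := by
      intro t
      exact ih (fun z => f (Fin.cons t z)) (fun z => g (Fin.cons t z))
        (fun z z' hle => hf _ _ (hcons t t z z' le_rfl hle))
        (fun z z' hle => hg _ _ (hcons t t z z' le_rfl hle))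
    have hFmono : ∀ a b, x a ≤ x b → F a ≤ F b := fun a b hab =>
      Finset.sum_le_sum fun z _ => mul_le_mul_of_nonneg_left
        (hf _ _ (hcons a b z z hab fun i => le_rfl))
        (Finset.prod_nonneg fun _ _ => hw _)
    have hGmono : ∀ a b, x a ≤ x b → G' a ≤ G' b := fun a b hab =>
      Finset.sum_le_sum fun z _ => mul_le_mul_of_nonneg_left
        (hg _ _ (hcons a b z z hab fun i => le_rfl))
        (Finset.prod_nonneg fun _ _ => hw _)
    have hmono2 : ∀ a b, 0 ≤ (F a - F b) * (G' a - G' b) := by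
      intro a b
      rcases le_total (x a) (x b) with hle | hle
      · nlinarith [hFmono a b hle, hGmono a b hle]
      · nlinarith [hFmono b a hle, hGmono b a hle]
    calc (∑ t, w t * F t) * (∑ t, w t * G' t)
        ≤ (∑ t, w t) * ∑ t, w t * (F t * G' t) := cheb w hw F G' hmono2
      _ = ∑ t, w t * (F t * G' t) := by rw [hw1, one_mul]
      _ ≤ ∑ t, w t * ∑ z : Fin n → Y,
            (∏ i, w (z i)) * (f (Fin.cons t z) * g (Fin.cons t z)) :=
          Finset.sum_le_sum fun t _ => mul_le_mul_of_nonneg_left (hIH t) (hw t)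

/-- Bhattacharyya bound for a single competitor. -/
private lemma nu_Eu_le {K : ℕ} (G : Matrix (Fin K) (Fin N) (ZMod 2)) (p0 p1 : Y → ℝ)
    (hp0 : ∀ a, 0 ≤ p0 a) (hp1 : ∀ a, 0 ≤ p1 a) (hp0sum : ∑ a, p0 a = 1)
    (u : Fin K → ZMod 2) :
    nuMeas p0 (Eu' G p0 p1 u) ≤ (∑ a, Real.sqrt (p0 a * p1 a)) ^ (Iu G u).card := by
  classical
  set I := Iu G u with hI
  have hpt : ∀ y : Fin N → Y, Set.indicator (Eu' G p0 p1 u) (fun y => ∏ i, p0 (y i)) y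
      ≤ ∏ i, (if i ∈ I then Real.sqrt (p0 (y i) * p1 (y i)) else p0 (y i)) := by
    intro y
    have hRnn : (0:ℝ) ≤ ∏ i, (if i ∈ I then Real.sqrt (p0 (y i) * p1 (y i)) else p0 (y i)) :=
      Finset.prod_nonneg fun i _ => by
        split_ifs
        · exact Real.sqrt_nonneg _
        · exact hp0 _
    by_cases hy : y ∈ Eu' G p0 p1 u
    · rw [Set.indicator_of_mem hy]
      have split : ∀ q : Fin N → ℝ, ∏ i, q i = (∏ i ∈ I, q i) * ∏ i ∈ Iᶜ, q i :=
        fun q => (Finset.prod_mul_prod_compl I q).symm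
      rw [split (fun i => p0 (y i)),
        split (fun i => if i ∈ I then Real.sqrt (p0 (y i) * p1 (y i)) else p0 (y i))]
      have e1 : (∏ i ∈ I, if i ∈ I then Real.sqrt (p0 (y i) * p1 (y i)) else p0 (y i))
          = ∏ i ∈ I, Real.sqrt (p0 (y i) * p1 (y i)) :=
        Finset.prod_congr rfl fun i hi => if_pos hi
      have e2 : (∏ i ∈ Iᶜ, if i ∈ I then Real.sqrt (p0 (y i) * p1 (y i)) else p0 (y i))
          = ∏ i ∈ Iᶜ, p0 (y i) :=
        Finset.prod_congr rfl fun i hi => if_neg (Finset.mem_compl.mp hi)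
      rw [e1, e2]
      have h0 : (0:ℝ) ≤ ∏ i ∈ I, p0 (y i) := Finset.prod_nonneg fun i _ => hp0 _
      have hy' : ∏ i ∈ I, p0 (y i) ≤ ∏ i ∈ I, p1 (y i) := hy
      have h1 : ∏ i ∈ I, p0 (y i) ≤ ∏ i ∈ I, Real.sqrt (p0 (y i) * p1 (y i)) := by
        have hsq : (∏ i ∈ I, p0 (y i)) ^ 2
            ≤ (∏ i ∈ I, Real.sqrt (p0 (y i) * p1 (y i))) ^ 2 := by
          have hr : (∏ i ∈ I, Real.sqrt (p0 (y i) * p1 (y i))) ^ 2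
              = ∏ i ∈ I, (p0 (y i) * p1 (y i)) := by
            rw [← Finset.prod_pow]
            exact Finset.prod_congr rfl fun i _ =>
              Real.sq_sqrt (mul_nonneg (hp0 _) (hp1 _))
          rw [hr]
          calc (∏ i ∈ I, p0 (y i)) ^ 2 = (∏ i ∈ I, p0 (y i)) * ∏ i ∈ I, p0 (y i) := sq _
            _ ≤ (∏ i ∈ I, p0 (y i)) * ∏ i ∈ I, p1 (y i) :=
                mul_le_mul_of_nonneg_left hy' h0
            _ = ∏ i ∈ I, (p0 (y i) * p1 (y i)) := Finset.prod_mul_distrib.symm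
        have hs0 : (0:ℝ) ≤ ∏ i ∈ I, Real.sqrt (p0 (y i) * p1 (y i)) :=
          Finset.prod_nonneg fun i _ => Real.sqrt_nonneg _
        calc ∏ i ∈ I, p0 (y i) = Real.sqrt ((∏ i ∈ I, p0 (y i)) ^ 2) :=
              (Real.sqrt_sq h0).symm
          _ ≤ Real.sqrt ((∏ i ∈ I, Real.sqrt (p0 (y i) * p1 (y i))) ^ 2) :=
              Real.sqrt_le_sqrt hsq
          _ = _ := Real.sqrt_sq hs0
      exact mul_le_mul_of_nonneg_right h1 (Finset.prod_nonneg fun i _ => hp0 _)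
    · rw [Set.indicator_of_notMem hy]
      exact hRnn
  calc nuMeas p0 (Eu' G p0 p1 u)
      ≤ ∑ y : Fin N → Y, ∏ i, (if i ∈ I then Real.sqrt (p0 (y i) * p1 (y i)) else p0 (y i)) :=
        Finset.sum_le_sum fun y _ => hpt y
    _ = ∏ i, ∑ a : Y, (if i ∈ I then Real.sqrt (p0 a * p1 a) else p0 a) :=
        (Fintype.prod_sum fun i a => if i ∈ I then Real.sqrt (p0 a * p1 a) else p0 a).symm
    _ = ∏ i, (if i ∈ I then (∑ a, Real.sqrt (p0 a * p1 a)) else 1) := by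
        refine Finset.prod_congr rfl fun i _ => ?_
        by_cases h : i ∈ I <;> simp [h, hp0sum]
    _ = (∑ a, Real.sqrt (p0 a * p1 a)) ^ I.card := by
        rw [Finset.prod_ite_mem Finset.univ I (fun _ => ∑ a, Real.sqrt (p0 a * p1 a)),
          Finset.univ_inter, Finset.prod_const]

/-- Up-closed with respect to the coordinatewise preorder induced by `x`. -/
private def UpC (x : Y → ℝ) (S : Set (Fin N → Y)) : Prop :=
  ∀ ⦃y y' : Fin N → Y⦄, (∀ i, x (y i) ≤ x (y' i)) → y ∈ S → y' ∈ S

private lemma upc_biInter {ι : Type*} (x : Y → ℝ) (t : Finset ι)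
    (E : ι → Set (Fin N → Y)) (h : ∀ a ∈ t, UpC x (E a)) :
    UpC x (⋂ a ∈ t, E a) := by
  intro y y' hle hy
  simp only [Set.mem_iInter] at hy ⊢
  exact fun a ha => h a ha hle (hy a ha)

private lemma upc_biUnion {ι : Type*} (x : Y → ℝ) (t : Finset ι)
    (E : ι → Set (Fin N → Y)) (h : ∀ a ∈ t, UpC x (E a)) :
    UpC x (⋃ a ∈ t, E a) := by
  intro y y' hle hy
  simp only [Set.mem_iUnion] at hy ⊢
  obtain ⟨a, ha, hya⟩ := hy
  exact ⟨a, ha, h a ha hle hya⟩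

private lemma upc_Eu {K : ℕ} (G : Matrix (Fin K) (Fin N) (ZMod 2)) (p0 p1 : Y → ℝ)
    (hp0 : ∀ a, 0 ≤ p0 a) (hp1 : ∀ a, 0 ≤ p1 a) (x : Y → ℝ)
    (hx0 : ∀ a, 0 ≤ x a)
    (hxr : ∀ a, p0 a ≠ 0 → x a = p1 a / p0 a)
    (hxB : ∀ a b, p0 a = 0 → p0 b ≠ 0 → ¬ x a ≤ x b)
    (u : Fin K → ZMod 2) : UpC x (Eu' G p0 p1 u) := by
  intro y y' hle hy
  by_cases hzero : ∃ i ∈ Iu G u, p0 (y' i) = 0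
  · obtain ⟨i, hi, h0⟩ := hzero
    have hz : ∏ i ∈ Iu G u, p0 (y' i) = 0 := Finset.prod_eq_zero hi h0
    show ∏ i ∈ Iu G u, p0 (y' i) ≤ ∏ i ∈ Iu G u, p1 (y' i)
    rw [hz]
    exact Finset.prod_nonneg fun j _ => hp1 _
  · push_neg at hzero
    have hyp : ∀ i ∈ Iu G u, p0 (y i) ≠ 0 := by
      intro i hi h0
      exact hxB (y i) (y' i) h0 (hzero i hi) (hle i)
    have hppos : 0 < ∏ i ∈ Iu G u, p0 (y i) :=
      Finset.prod_pos fun i hi => lt_of_le_of_ne (hp0 _) (Ne.symm (hyp i hi))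
    have hppos' : 0 < ∏ i ∈ Iu G u, p0 (y' i) :=
      Finset.prod_pos fun i hi => lt_of_le_of_ne (hp0 _) (Ne.symm (hzero i hi))
    have h1 : (1:ℝ) ≤ ∏ i ∈ Iu G u, x (y i) := by
      rw [Finset.prod_congr rfl fun i hi => hxr _ (hyp i hi), Finset.prod_div_distrib,
        le_div_iff₀ hppos, one_mul]
      exact hy
    have h2 : ∏ i ∈ Iu G u, x (y i) ≤ ∏ i ∈ Iu G u, x (y' i) :=
      Finset.prod_le_prod (fun i _ => hx0 _) (fun i _ => hle i)
    have hrw : ∏ i ∈ Iu G u, p1 (y' i)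
        = (∏ i ∈ Iu G u, x (y' i)) * ∏ i ∈ Iu G u, p0 (y' i) := by
      rw [← Finset.prod_mul_distrib]
      refine Finset.prod_congr rfl fun i hi => ?_
      rw [hxr _ (hzero i hi), div_mul_cancel₀ _ (hzero i hi)]
    show ∏ i ∈ Iu G u, p0 (y' i) ≤ ∏ i ∈ Iu G u, p1 (y' i)
    rw [hrw]
    exact le_mul_of_one_le_left hppos'.le (h1.trans h2)

private lemma harris_sets (p0 : Y → ℝ) (hp0 : ∀ a, 0 ≤ p0 a) (hp0sum : ∑ a, p0 a = 1)
    (x : Y → ℝ) (A B : Set (Fin N → Y)) (hA : UpC x A) (hB : UpC x B) :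
    nuMeas p0 A * nuMeas p0 B ≤ nuMeas p0 (A ∩ B) := by
  classical
  have hrw : ∀ S : Set (Fin N → Y), nuMeas p0 S
      = ∑ y : Fin N → Y, (∏ i, p0 (y i)) * (if y ∈ S then (1:ℝ) else 0) := by
    intro S
    refine Finset.sum_congr rfl fun y _ => ?_
    by_cases h : y ∈ S <;> simp [Set.indicator_apply, h]
  have hchiA : ∀ y y' : Fin N → Y, (∀ i, x (y i) ≤ x (y' i)) →
      (if y ∈ A then (1:ℝ) else 0) ≤ (if y' ∈ A then (1:ℝ) else 0) := by
    intro y y' hle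
    by_cases h : y ∈ A
    · simp [h, hA hle h]
    · by_cases h' : y' ∈ A <;> simp [h, h']
  have hchiB : ∀ y y' : Fin N → Y, (∀ i, x (y i) ≤ x (y' i)) →
      (if y ∈ B then (1:ℝ) else 0) ≤ (if y' ∈ B then (1:ℝ) else 0) := by
    intro y y' hle
    by_cases h : y ∈ B
    · simp [h, hB hle h]
    · by_cases h' : y' ∈ B <;> simp [h, h']
  rw [hrw A, hrw B, hrw (A ∩ B)]
  have hmain := harris p0 hp0 hp0sum x N (fun y => if y ∈ A then (1:ℝ) else 0)
    (fun y => if y ∈ B then (1:ℝ) else 0) hchiA hchiB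
  refine hmain.trans (le_of_eq (Finset.sum_congr rfl fun y _ => ?_))
  by_cases h1 : y ∈ A <;> by_cases h2 : y ∈ B <;>
    simp [h1, h2, Set.mem_inter_iff]

end DIaux

/-- Divide-and-Intersect bound for a general binary-input memoryless channel. -/
theorem DI_bound_BMSC (Y : Type) [Fintype Y] (K N : ℕ)
    (G : Matrix (Fin K) (Fin N) (ZMod 2)) (p0 p1 : Y → ℝ)
    (hp0 : ∀ y, 0 ≤ p0 y) (hp1 : ∀ y, 0 ≤ p1 y)
    (hp0sum : ∑ y, p0 y = 1) (hp1sum : ∑ y, p1 y = 1)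
    (Z : ℝ) (hZdef : Z = ∑ y, Real.sqrt (p0 y * p1 y))
    (hZ0 : 0 < Z) (hZ1 : Z < 1)
    (Pe : ℝ) (hPe0 : 0 < Pe) (hPe1 : Pe < 1) (L : ℕ) (hL : 1 ≤ L)
    (hdmin : ∀ u : Fin K → ZMod 2, u ≠ 0 →
      Real.log (Pe / 8) / Real.log Z < ((Iu G u).card : ℝ))
    (hbig : PL G p0 p1 L > Pe) :
    PL G p0 p1 (L + 1) ≥ 3 / 16 * (PL G p0 p1 L) ^ 2 := by
  classical
  have hPpos : (0:ℝ) < PL G p0 p1 L := lt_trans hPe0 hbig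
  set P := PL G p0 p1 L with hPdef
  set 𝒮 : Finset (Finset (Fin K → ZMod 2)) :=
    Finset.univ.filter (fun T => T.card = L ∧ ∀ u ∈ T, u ≠ 0) with h𝒮
  set 𝒮' : Finset (Finset (Fin K → ZMod 2)) :=
    Finset.univ.filter (fun T => T.card = L + 1 ∧ ∀ u ∈ T, u ≠ 0) with h𝒮'
  have hPL : P = nuMeas p0 (⋃ T ∈ 𝒮, EuT' G p0 p1 T) := by
    rw [hPdef]; unfold PL; congr 1; ext y
    simp [h𝒮, Finset.mem_filter, Set.mem_iUnion]
  have hPL' : PL G p0 p1 (L + 1) = nuMeas p0 (⋃ T ∈ 𝒮', EuT' G p0 p1 T) := by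
    unfold PL; congr 1; ext y
    simp [h𝒮', Finset.mem_filter, Set.mem_iUnion]
  have hlogZ : Real.log Z < 0 := Real.log_neg hZ0 hZ1
  have hPe8 : (0:ℝ) < Pe / 8 := by linarith
  have hZd : ∀ u : Fin K → ZMod 2, u ≠ 0 → Z ^ (Iu G u).card < Pe / 8 := by
    intro u hu
    have hd := hdmin u hu
    have h1 : ((Iu G u).card : ℝ) * Real.log Z < Real.log (Pe / 8) :=
      (div_lt_iff_of_neg hlogZ).mp hd
    have h2 : Z ^ (Iu G u).card = Real.exp (((Iu G u).card : ℝ) * Real.log Z) := by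
      rw [← Real.log_pow, Real.exp_log (pow_pos hZ0 _)]
    rw [h2, ← Real.exp_log hPe8]
    exact Real.exp_lt_exp.mpr h1
  have hTsmall : ∀ T ∈ 𝒮, nuMeas p0 (EuT' G p0 p1 T) ≤ Pe / 8 := by
    intro T hT
    rw [h𝒮, Finset.mem_filter] at hT
    obtain ⟨-, hcard, hnz⟩ := hT
    have hTne : T.Nonempty := Finset.card_pos.mp (by omega)
    obtain ⟨u, hu⟩ := hTne
    have hsub : EuT' G p0 p1 T ⊆ Eu' G p0 p1 u := Set.biInter_subset_of_mem hu
    refine (nuMeas_mono p0 hp0 hsub).trans ?_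
    refine ((nu_Eu_le G p0 p1 hp0 hp1 hp0sum u).trans_lt ?_).le
    rw [← hZdef]
    exact hZd u (hnz u hu)
  obtain ⟨B, hBsub, hB1, hB2⟩ := greedy p0 hp0 (EuT' G p0 p1) (Pe / 8) (7 / 16 * P)
    (by positivity) (by positivity) 𝒮 hTsmall (by rw [← hPL]; linarith)
  set A1 := ⋃ T ∈ B, EuT' G p0 p1 T with hA1
  set A2 := ⋃ T ∈ 𝒮 \ B, EuT' G p0 p1 T with hA2
  have hsplit : (⋃ T ∈ 𝒮, EuT' G p0 p1 T) ⊆ A1 ∪ A2 := by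
    intro y hy
    simp only [hA1, hA2, Set.mem_iUnion, Set.mem_union, Finset.mem_sdiff] at hy ⊢
    obtain ⟨T, hT, hyT⟩ := hy
    by_cases hTB : T ∈ B
    · exact Or.inl ⟨T, hTB, hyT⟩
    · exact Or.inr ⟨T, ⟨hT, hTB⟩, hyT⟩
  have hA2big : 7 / 16 * P ≤ nuMeas p0 A2 := by
    have h1 := nuMeas_mono p0 hp0 hsplit
    have h2 := nuMeas_union_le p0 hp0 A1 A2
    rw [← hPL] at h1
    linarith
  -- the coordinatewise order
  set B0 : ℝ := 1 + ∑ a, p1 a / p0 a with hB0def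
  set x : Y → ℝ := fun a => if p0 a = 0 then B0 else p1 a / p0 a with hxdef
  have hrat_nn : ∀ a : Y, 0 ≤ p1 a / p0 a := fun a => div_nonneg (hp1 a) (hp0 a)
  have hsum_nn : 0 ≤ ∑ a, p1 a / p0 a := Finset.sum_nonneg fun a _ => hrat_nn a
  have hB0lt : ∀ b, p0 b ≠ 0 → p1 b / p0 b < B0 := by
    intro b hb
    have h1 : p1 b / p0 b ≤ ∑ a, p1 a / p0 a :=
      Finset.single_le_sum (fun a _ => hrat_nn a) (Finset.mem_univ b)
    rw [hB0def]; linarith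
  have hx0 : ∀ a, 0 ≤ x a := by
    intro a
    rw [hxdef]; dsimp only
    split_ifs
    · rw [hB0def]; linarith
    · exact hrat_nn a
  have hxr : ∀ a, p0 a ≠ 0 → x a = p1 a / p0 a := by
    intro a h; rw [hxdef]; simp [h]
  have hxB : ∀ a b, p0 a = 0 → p0 b ≠ 0 → ¬ x a ≤ x b := by
    intro a b ha hb hle
    have hle' : (if p0 a = 0 then B0 else p1 a / p0 a)
        ≤ (if p0 b = 0 then B0 else p1 b / p0 b) := hle
    rw [if_pos ha, if_neg hb] at hle'
    exact absurd hle' (not_le.mpr (hB0lt b hb))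
  have hupE : ∀ u : Fin K → ZMod 2, UpC x (Eu' G p0 p1 u) :=
    upc_Eu G p0 p1 hp0 hp1 x hx0 hxr hxB
  have hupT : ∀ T : Finset (Fin K → ZMod 2), UpC x (EuT' G p0 p1 T) := fun T =>
    upc_biInter x T _ (fun u _ => hupE u)
  have hup1 : UpC x A1 := by rw [hA1]; exact upc_biUnion x B _ (fun T _ => hupT T)
  have hup2 : UpC x A2 := by rw [hA2]; exact upc_biUnion x (𝒮 \ B) _ (fun T _ => hupT T)
  have hFKG : nuMeas p0 A1 * nuMeas p0 A2 ≤ nuMeas p0 (A1 ∩ A2) :=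
    harris_sets p0 hp0 hp0sum x A1 A2 hup1 hup2
  -- intersect step
  have hsub2 : A1 ∩ A2 ⊆ ⋃ T ∈ 𝒮', EuT' G p0 p1 T := by
    rintro y ⟨hy1, hy2⟩
    rw [hA1] at hy1
    rw [hA2] at hy2
    simp only [Set.mem_iUnion] at hy1 hy2
    obtain ⟨T, hTB, hyT⟩ := hy1
    obtain ⟨T', hT'B, hyT'⟩ := hy2
    have hTS : T ∈ 𝒮 := hBsub hTB
    have hT'S : T' ∈ 𝒮 := (Finset.mem_sdiff.mp hT'B).1
    have hne : T ≠ T' := fun h => (Finset.mem_sdiff.mp hT'B).2 (h ▸ hTB)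
    rw [h𝒮, Finset.mem_filter] at hTS hT'S
    obtain ⟨-, hTcard, hTnz⟩ := hTS
    obtain ⟨-, hT'card, hT'nz⟩ := hT'S
    have hss : T ⊂ T ∪ T' := by
      refine Finset.ssubset_iff_subset_ne.mpr ⟨Finset.subset_union_left, ?_⟩
      intro h
      have hT'T : T' ⊆ T := by
        have h2 := Finset.subset_union_right (s₁ := T) (s₂ := T')
        rw [← h] at h2
        exact h2
      have : T' = T := Finset.eq_of_subset_of_card_le hT'T (by omega)
      exact hne this.symm
    have hcardU : L + 1 ≤ (T ∪ T').card := by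
      have := Finset.card_lt_card hss
      omega
    obtain ⟨T'', hT''sub, hT''card⟩ := Finset.exists_subset_card_eq hcardU
    simp only [Set.mem_iUnion]
    refine ⟨T'', ?_, ?_⟩
    · rw [h𝒮', Finset.mem_filter]
      refine ⟨Finset.mem_univ _, hT''card, fun u hu => ?_⟩
      rcases Finset.mem_union.mp (hT''sub hu) with h | h
      · exact hTnz u h
      · exact hT'nz u h
    · unfold EuT' at hyT hyT' ⊢
      simp only [Set.mem_iInter] at hyT hyT' ⊢
      intro u hu
      rcases Finset.mem_union.mp (hT''sub hu) with h | h
      · exact hyT u h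
      · exact hyT' u h
  have hfinal : nuMeas p0 (A1 ∩ A2) ≤ nuMeas p0 (⋃ T ∈ 𝒮', EuT' G p0 p1 T) :=
    nuMeas_mono p0 hp0 hsub2
  rw [ge_iff_le, hPL']
  have hA1nn : 0 ≤ nuMeas p0 A1 := nuMeas_nonneg p0 hp0 _
  have hprod : (7 / 16 * P) * (7 / 16 * P) ≤ nuMeas p0 A1 * nuMeas p0 A2 :=
    mul_le_mul hB1 hA2big (by positivity) hA1nn
  nlinarith [hprod, hFKG, hfinal, sq_nonneg P]
end

section
/- Unions of likelihood events are positively correlated: for any subsets U₁, U₂ ⊆ F₂^K, ν( (∪_{u∈U₁} E'_u) ∩ (∪_{ũ∈U₂} E'_ũ) ) ≥ ν(∪_{u∈U₁} E'_u) · ν(∪_{ũ∈U₂} E'_ũ). -/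
/-!
Order the output alphabet by increasing likelihood ratio `p1 / p0`, breaking ties arbitrarily.
For the coordinatewise order on `𝒴^N` every `E'_u` is an upper set: raising a coordinate can only
increase `∏ p1 / ∏ p0`. The product measure `ν` is log-modular on this distributive lattice,
`ν(a ⊓ b) ν(a ⊔ b) = ν(a) ν(b)`, so by the FKG inequality any two upper sets, in particular any
two unions of the `E'_u`, are positively correlated.
-/

open Finset

theorem IsUpperSet.monotone_indicator_one {α β : Type*} [Preorder α] [Preorder β] [Zero β] [One β]
    [ZeroLEOneClass β] {s : Set α} (hs : IsUpperSet s) : Monotone (s.indicator (1 : α → β)) := by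
  intro a b hab
  by_cases ha : a ∈ s
  · simp [ha, hs hab ha]
  · simp only [Set.indicator_of_notMem ha]
    exact Set.indicator_nonneg (fun _ _ => zero_le_one) b

theorem IsUpperSet.sum_indicator_mul_sum_indicator_le {α β : Type*} [DistribLattice α] [Fintype α]
    [CommSemiring β] [LinearOrder β] [IsStrictOrderedRing β] [ExistsAddOfLE β] {μ : α → β}
    (hμ₀ : 0 ≤ μ) (hμ : ∀ a b, μ a * μ b ≤ μ (a ⊓ b) * μ (a ⊔ b)) {s t : Set α}
    (hs : IsUpperSet s) (ht : IsUpperSet t) :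
    (∑ a, s.indicator μ a) * ∑ a, t.indicator μ a ≤ (∑ a, μ a) * ∑ a, (s ∩ t).indicator μ a := by
  have hfkg := fkg (s.indicator 1) (t.indicator 1) μ hμ₀
    (Set.indicator_nonneg fun _ _ => zero_le_one) (Set.indicator_nonneg fun _ _ => zero_le_one)
    hs.monotone_indicator_one ht.monotone_indicator_one hμ
  simpa only [← Set.inter_indicator_mul, ← Set.indicator_mul_right, Pi.one_apply, mul_one,
    Set.indicator_indicator, Set.inter_comm t s] using hfkg

theorem Finset.prod_comp_inf_mul_prod_comp_sup {ι Y M : Type*} [Fintype ι] [LinearOrder Y]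
    [CommMonoid M] (p : Y → M) (a b : ι → Y) :
    (∏ i, p ((a ⊓ b) i)) * ∏ i, p ((a ⊔ b) i) = (∏ i, p (a i)) * ∏ i, p (b i) := by
  simp only [← prod_mul_distrib]
  refine prod_congr rfl fun i _ => ?_
  rcases le_total (a i) (b i) with h | h
  · simp [h]
  · simp [h, mul_comm]

theorem exists_linearOrder_monotone {Y β : Type*} [Finite Y] [LinearOrder β] (f : Y → β) :
    ∃ _ : LinearOrder Y, Monotone f := by
  obtain ⟨n, ⟨e⟩⟩ := Finite.exists_equiv_fin Y
  let key : Y → β ×ₗ Fin n := fun y => toLex (f y, e y)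
  have hkey : Function.Injective key := fun a b h => e.injective (congrArg (fun p => (ofLex p).2) h)
  let _ : LinearOrder Y := LinearOrder.lift' key hkey
  refine ⟨‹_›, fun a b hab => ?_⟩
  rcases Prod.Lex.le_iff.1 (show key a ≤ key b from hab) with h | h
  · exact h.le
  · exact h.1.le

theorem isUpperSet_setOf_prod_le_prod {ι Y : Type*} [Preorder Y] (s : Finset ι) {p q : Y → ℝ}
    (hp : 0 ≤ p) (hq : 0 ≤ q) (hpq : ∀ ⦃a b⦄, a ≤ b → p b ≠ 0 → p a ≠ 0 ∧ q a * p b ≤ q b * p a) :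
    IsUpperSet {y : ι → Y | ∏ i ∈ s, p (y i) ≤ ∏ i ∈ s, q (y i)} := by
  intro y y' hyy' (hy : ∏ i ∈ s, p (y i) ≤ ∏ i ∈ s, q (y i))
  show ∏ i ∈ s, p (y' i) ≤ ∏ i ∈ s, q (y' i)
  by_cases h₀ : ∏ i ∈ s, p (y' i) = 0
  · exact h₀ ▸ prod_nonneg fun i _ => hq _
  have hcoord i (hi : i ∈ s) := hpq (hyy' i) (prod_ne_zero_iff.1 h₀ i hi)
  have hq_pos : 0 < ∏ i ∈ s, q (y i) :=
    (prod_pos fun i hi => (hp (y i)).lt_of_ne (hcoord i hi).1.symm).trans_le hy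
  refine le_of_mul_le_mul_left ?_ hq_pos
  calc (∏ i ∈ s, q (y i)) * ∏ i ∈ s, p (y' i)
      = ∏ i ∈ s, q (y i) * p (y' i) := prod_mul_distrib.symm
    _ ≤ ∏ i ∈ s, q (y' i) * p (y i) :=
        prod_le_prod (fun i _ => mul_nonneg (hq _) (hp _)) fun i hi => (hcoord i hi).2
    _ = (∏ i ∈ s, q (y' i)) * ∏ i ∈ s, p (y i) := prod_mul_distrib
    _ ≤ (∏ i ∈ s, q (y' i)) * ∏ i ∈ s, q (y i) := by gcongr; exact prod_nonneg fun i _ => hq _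
    _ = (∏ i ∈ s, q (y i)) * ∏ i ∈ s, q (y' i) := mul_comm _ _

theorem ne_zero_and_mul_le_mul_of_div_add_le_div_add {a₀ a₁ b₀ b₁ : ℝ} (ha₀ : 0 ≤ a₀)
    (ha₁ : 0 ≤ a₁) (hb₀ : 0 ≤ b₀) (hb₁ : 0 ≤ b₁) (h : b₀ / (b₀ + b₁) ≤ a₀ / (a₀ + a₁))
    (hb₀' : b₀ ≠ 0) : a₀ ≠ 0 ∧ a₁ * b₀ ≤ b₁ * a₀ := by
  have hb : 0 < b₀ + b₁ := by positivity
  have ha₀' : a₀ ≠ 0 := by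
    rintro rfl
    simp only [zero_div] at h
    exact (div_pos (hb₀.lt_of_ne' hb₀') hb).not_ge h
  have ha : 0 < a₀ + a₁ := by positivity
  rw [div_le_div_iff₀ hb ha] at h
  exact ⟨ha₀', by linarith⟩

theorem Eu'_unions_pos_correlated_general (Y : Type) [Fintype Y] (K N : ℕ)
    (G : Matrix (Fin K) (Fin N) (ZMod 2)) (p0 p1 : Y → ℝ)
    (hp0 : ∀ y, 0 ≤ p0 y) (hp1 : ∀ y, 0 ≤ p1 y)
    (hp0sum : ∑ y, p0 y = 1)
    (U₁ U₂ : Set (Fin K → ZMod 2)) :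
    nuMeas p0 ((⋃ u ∈ U₁, Eu' G p0 p1 u) ∩ ⋃ u ∈ U₂, Eu' G p0 p1 u)
      ≥ nuMeas p0 (⋃ u ∈ U₁, Eu' G p0 p1 u)
          * nuMeas p0 (⋃ u ∈ U₂, Eu' G p0 p1 u) := by
  -- Symbols with `p0 = p1 = 0` get `0 / 0 = 0`, hence sit at the top of the order; this is
  -- right, since such a symbol at a position of `I_u` puts `y` in `E'_u`.
  obtain ⟨_, hmono⟩ := exists_linearOrder_monotone fun y => OrderDual.toDual (p0 y / (p0 y + p1 y))
  have hupper (U : Set (Fin K → ZMod 2)) : IsUpperSet (⋃ u ∈ U, Eu' G p0 p1 u) :=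
    isUpperSet_iUnion₂ fun u _ => isUpperSet_setOf_prod_le_prod (Iu G u) hp0 hp1
      fun a b hab => ne_zero_and_mul_le_mul_of_div_add_le_div_add (hp0 a) (hp1 a) (hp0 b) (hp1 b)
        (hmono hab)
  have hmass : ∑ y : Fin N → Y, ∏ i, p0 (y i) = 1 := by
    rw [← Fintype.prod_sum]; simp [hp0sum]
  have := IsUpperSet.sum_indicator_mul_sum_indicator_le (μ := fun y : Fin N → Y => ∏ i, p0 (y i))
    (fun y => prod_nonneg fun i _ => hp0 (y i))
    (fun a b => (prod_comp_inf_mul_prod_comp_sup p0 a b).ge) (hupper U₁) (hupper U₂)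
  rwa [hmass, one_mul] at this

/-- Unions of likelihood events are positively correlated. -/
theorem Eu'_unions_pos_correlated (Y : Type) [Fintype Y] (K N : ℕ)
    (G : Matrix (Fin K) (Fin N) (ZMod 2)) (p0 p1 : Y → ℝ)
    (hp0 : ∀ y, 0 ≤ p0 y) (hp1 : ∀ y, 0 ≤ p1 y)
    (hp0sum : ∑ y, p0 y = 1) (hp1sum : ∑ y, p1 y = 1)
    (U₁ U₂ : Set (Fin K → ZMod 2)) :
    nuMeas p0 ((⋃ u ∈ U₁, Eu' G p0 p1 u) ∩ ⋃ u ∈ U₂, Eu' G p0 p1 u)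
      ≥ nuMeas p0 (⋃ u ∈ U₁, Eu' G p0 p1 u)
          * nuMeas p0 (⋃ u ∈ U₂, Eu' G p0 p1 u) :=
  Eu'_unions_pos_correlated_general Y K N G p0 p1 hp0 hp1 hp0sum U₁ U₂
end

section
/- Extremal bounds on iterated polar transforms for the BEC: let n ∈ ℕ, let b = (b₁,…,bₙ) ∈ {0,1}ⁿ have exactly m entries equal to 1, and let x ∈ [0,1]. Then 1 − (1 − x^{2^m})^{2^{n−m}} ≤ (f_{b₁} ∘ f_{b₂} ∘ ⋯ ∘ f_{bₙ})(x) ≤ (1 − (1 − x)^{2^{n−m}})^{2^m}. -/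
/-- The polar transform maps for the BEC: a '1' step squares the erasure
probability, a '0' step maps x to 1 - (1 - x)². -/
noncomputable def polarStep : Bool → ℝ → ℝ
  | true, x => x ^ 2
  | false, x => 1 - (1 - x) ^ 2

/-- Iterated polar transform along the binary word `b = (b₁, …, bₙ)`:
`polarIter [b₁, …, bₙ] x = (f_{b₁} ∘ f_{b₂} ∘ ⋯ ∘ f_{bₙ}) x`. -/
noncomputable def polarIter : List Bool → ℝ → ℝ
  | [], x => x
  | b :: bs, x => polarStep b (polarIter bs x)

/-!
Since `f₀(x) = 1 - f₁(1 - x)`, complementing the word and the argument turns `polarIter b x`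
into `1 - polarIter b x`, so the lower bound is the dual of the upper bound. The upper bound is
attained by applying all `f₀` steps before the `f₁` steps; it follows by induction on `b` from
`f₀(y ^ K) ≤ f₀(y) ^ K`, which after cancelling `y ^ K` is the Bernoulli consequence
`2 ≤ y ^ K + (2 - y) ^ K`.
-/

lemma two_le_pow_add_two_sub_pow {y : ℝ} (hy : -1 ≤ y) (hy' : y ≤ 3) (K : ℕ) :
    2 ≤ y ^ K + (2 - y) ^ K := by
  have below := one_add_mul_le_pow (a := y - 1) (by linarith) K
  have above := one_add_mul_le_pow (a := 1 - y) (by linarith) K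
  rw [add_sub_cancel] at below
  rw [show 1 + (1 - y) = 2 - y by ring] at above
  linarith

lemma polarStep_false_pow_le {y : ℝ} (hy : 0 ≤ y) (hy' : y ≤ 3) (K : ℕ) :
    polarStep false (y ^ K) ≤ polarStep false y ^ K := by
  have hfactor : ∀ z : ℝ, 1 - (1 - z) ^ 2 = z * (2 - z) := fun z => by ring
  simp only [polarStep, hfactor, mul_pow]
  have := two_le_pow_add_two_sub_pow (by linarith) hy' K
  exact mul_le_mul_of_nonneg_left (by linarith) (pow_nonneg hy K)

lemma polarStep_mono (b : Bool) {x y : ℝ} (hx : 0 ≤ x) (hy : y ≤ 1) (hxy : x ≤ y) :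
    polarStep b x ≤ polarStep b y := by
  cases b
  · have : (1 - y) ^ 2 ≤ (1 - x) ^ 2 := pow_le_pow_left₀ (by linarith) (by linarith) 2
    simp only [polarStep]
    linarith
  · exact pow_le_pow_left₀ hx hxy 2

lemma polarStep_mem_Icc (b : Bool) {x : ℝ} (hx : x ∈ Set.Icc (0 : ℝ) 1) :
    polarStep b x ∈ Set.Icc (0 : ℝ) 1 := by
  obtain ⟨hx0, hx1⟩ := hx
  cases b <;> simp only [polarStep, Set.mem_Icc] <;> constructor <;> nlinarith

lemma polarIter_mem_Icc (b : List Bool) {x : ℝ} (hx : x ∈ Set.Icc (0 : ℝ) 1) :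
    polarIter b x ∈ Set.Icc (0 : ℝ) 1 := by
  induction b with
  | nil => exact hx
  | cons c bs ih => exact polarStep_mem_Icc c ih

lemma polarStep_not (b : Bool) (x : ℝ) : polarStep (!b) (1 - x) = 1 - polarStep b x := by
  cases b <;> simp only [polarStep, Bool.not_true, Bool.not_false] <;> ring

lemma polarIter_map_not (b : List Bool) (x : ℝ) :
    polarIter (b.map not) (1 - x) = 1 - polarIter b x := by
  induction b with
  | nil => rfl
  | cons c bs ih => simp only [List.map_cons, polarIter, ih, polarStep_not]

lemma polarIter_le (b : List Bool) {x : ℝ} (hx0 : 0 ≤ x) (hx1 : x ≤ 1) :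
    polarIter b x ≤ (1 - (1 - x) ^ 2 ^ b.count false) ^ 2 ^ b.count true := by
  induction b with
  | nil => simp [polarIter]
  | cons c bs ih =>
    obtain ⟨hy0, hy1⟩ := polarIter_mem_Icc bs ⟨hx0, hx1⟩
    set a := 1 - (1 - x) ^ 2 ^ bs.count false
    have ha0 : 0 ≤ a := sub_nonneg.2 (pow_le_one₀ (by linarith) (by linarith))
    have ha1 : a ≤ 1 := sub_le_self _ (pow_nonneg (by linarith) _)
    cases c
    · have hstep : polarStep false a = 1 - (1 - x) ^ 2 ^ (bs.count false + 1) := by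
        simp only [polarStep, a, pow_succ, pow_mul]
        ring
      calc polarIter (false :: bs) x
          ≤ polarStep false (a ^ 2 ^ bs.count true) :=
            polarStep_mono false hy0 (pow_le_one₀ ha0 ha1) ih
        _ ≤ polarStep false a ^ 2 ^ bs.count true :=
            polarStep_false_pow_le ha0 (by linarith) _
        _ = _ := by simp [hstep, a]
    · calc polarIter (true :: bs) x
          ≤ (a ^ 2 ^ bs.count true) ^ 2 := pow_le_pow_left₀ hy0 ih 2
        _ = _ := by rw [← pow_mul, ← pow_succ]; simp [a]

lemma le_polarIter (b : List Bool) {x : ℝ} (hx0 : 0 ≤ x) (hx1 : x ≤ 1) :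
    1 - (1 - x ^ 2 ^ b.count true) ^ 2 ^ b.count false ≤ polarIter b x := by
  have hdual := polarIter_le (b.map not) (x := 1 - x) (by linarith) (by linarith)
  have hcount_true : (b.map not).count true = b.count false :=
    List.count_map_of_injective b not Bool.not_injective false
  have hcount_false : (b.map not).count false = b.count true :=
    List.count_map_of_injective b not Bool.not_injective true
  rw [polarIter_map_not, hcount_true, hcount_false, sub_sub_cancel] at hdual
  linarith

/-- Extremal bounds on iterated polar transforms for the BEC. -/
theorem polarIter_bounds (b : List Bool) (x : ℝ) (hx0 : 0 ≤ x) (hx1 : x ≤ 1)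
    (n m : ℕ) (hn : n = b.length) (hm : m = b.count true) :
    1 - (1 - x ^ (2 ^ m)) ^ (2 ^ (n - m)) ≤ polarIter b x ∧
      polarIter b x ≤ (1 - (1 - x) ^ (2 ^ (n - m))) ^ (2 ^ m) := by
  have hfalse : n - m = b.count false := by
    rw [hn, hm, ← List.count_false_add_count_true, Nat.add_sub_cancel]
  rw [hfalse, hm]
  exact ⟨le_polarIter b hx0 hx1, polarIter_le b hx0 hx1⟩
end

section
/- Threshold for the worst unfrozen channel to dominate the best frozen channel (BEC): let ε ∈ (0,1) and c, k, n ∈ ℕ with c + k ≤ n. If 2^k ≥ ln(1−ε)/ln(1−ε^{2^c}), then 1 − (1 − ε^{2^c})^{2^{n−c}} ≥ (1 − (1 − ε)^{2^{n−c−k}})^{2^{c+k}}. -/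
/-- Threshold for the worst unfrozen channel to dominate the best frozen
channel (BEC): if 2^k ≥ ln(1-ε)/ln(1-ε^{2^c}), then
Z_min(c) = 1 - (1-ε^{2^c})^{2^{n-c}} dominates
Z_max(c+k) = (1-(1-ε)^{2^{n-c-k}})^{2^{c+k}}. -/
theorem Zmin_ge_Zmax (ε : ℝ) (hε0 : 0 < ε) (hε1 : ε < 1) (c k n : ℕ)
    (hckn : c + k ≤ n)
    (hk : (2 ^ k : ℝ) ≥ Real.log (1 - ε) / Real.log (1 - ε ^ (2 ^ c))) :
    1 - (1 - ε ^ (2 ^ c)) ^ (2 ^ (n - c))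
      ≥ (1 - (1 - ε) ^ (2 ^ (n - c - k))) ^ (2 ^ (c + k)) := by
  set a : ℝ := 1 - ε ^ (2 ^ c) with ha_def
  set b : ℝ := 1 - ε with hb_def
  have hεc0 : 0 < ε ^ (2 ^ c) := pow_pos hε0 _
  have hεc1 : ε ^ (2 ^ c) < 1 := pow_lt_one₀ hε0.le hε1 (Nat.pos_of_ne_zero (by positivity)).ne'
  have ha0 : 0 < a := by simp [ha_def]; linarith
  have ha1 : a < 1 := by simp [ha_def]; linarith
  have hb0 : 0 < b := by simp [hb_def]; linarith
  have hb1 : b < 1 := by simp [hb_def]; linarith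
  have hla : Real.log a < 0 := Real.log_neg ha0 ha1
  -- from hk : 2^k ≥ log b / log a, deduce a^{2^k} ≤ b
  have hkey : a ^ (2 ^ k) ≤ b := by
    have h1 : (2 ^ k : ℝ) * Real.log a ≤ Real.log b := by
      have := (div_le_iff_of_neg hla).mp hk
      linarith
    have h2 : Real.log (a ^ (2 ^ k)) ≤ Real.log b := by
      rw [Real.log_pow]; push_cast; exact h1
    exact (Real.log_le_log_iff (pow_pos ha0 _) hb0).mp h2
  set m : ℕ := n - c - k with hm_def
  have hnc : n - c = k + m := by omega
  have step1 : a ^ (2 ^ (n - c)) ≤ b ^ (2 ^ m) := by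
    rw [hnc, pow_add, pow_mul]
    exact pow_le_pow_left₀ (pow_nonneg ha0.le _) hkey _
  have hbm1 : b ^ (2 ^ m) ≤ 1 := pow_le_one₀ hb0.le hb1.le
  have hbm0 : 0 < b ^ (2 ^ m) := pow_pos hb0 _
  have step2 : (1 - b ^ (2 ^ m)) ^ (2 ^ (c + k)) ≤ 1 - b ^ (2 ^ m) := by
    rcases Nat.eq_zero_or_pos (2 ^ (c + k)) with h | h
    · exact absurd h (by positivity)
    · calc (1 - b ^ (2 ^ m)) ^ (2 ^ (c + k)) ≤ (1 - b ^ (2 ^ m)) ^ 1 :=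
            pow_le_pow_of_le_one (by linarith) (by linarith) h
        _ = 1 - b ^ (2 ^ m) := pow_one _
  linarith
end

section
/- Extremal bounds on iterated Bhattacharyya transforms for a general binary-input memoryless channel: let n ∈ ℕ, let b = (b₁,…,bₙ) ∈ {0,1}ⁿ have exactly m entries equal to 1, let Z ∈ [0,1], and let z₀, z₁, …, zₙ ∈ [0,1] satisfy z₀ = Z and, for each i ∈ {1,…,n}: zᵢ = zᵢ₋₁² if bᵢ = 1, while √(1 − (1 − zᵢ₋₁²)²) ≤ zᵢ ≤ 1 − (1 − zᵢ₋₁)² if bᵢ = 0. Then √(1 − (1 − Z^{2^{m+1}})^{2^{n−m}}) ≤ zₙ ≤ (1 − (1 − Z)^{2^{n−m}})^{2^m}. -/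
private lemma key_ineq (x : ℝ) (hx0 : 0 ≤ x) (hx1 : x ≤ 1) (K : ℕ) :
    2 - x ^ K ≤ (2 - x) ^ K := by
  induction K with
  | zero => norm_num
  | succ K ih =>
    have hxK : x ^ K ≤ 1 := pow_le_one₀ hx0 hx1
    have hxKn : 0 ≤ x ^ K := pow_nonneg hx0 K
    have h2x : (0:ℝ) ≤ 2 - x := by linarith
    calc 2 - x ^ (K + 1) ≤ (2 - x ^ K) * (2 - x) := by
          rw [pow_succ]
          nlinarith [mul_nonneg (by linarith : (0:ℝ) ≤ 1 - x) (by linarith : (0:ℝ) ≤ 1 - x ^ K)]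
      _ ≤ (2 - x) ^ K * (2 - x) := by nlinarith
      _ = (2 - x) ^ (K + 1) := by ring

private lemma swapA (a : ℝ) (h0 : 0 ≤ a) (h1 : a ≤ 1) (K : ℕ) :
    1 - (1 - a ^ 2) ^ K ≤ (1 - (1 - a) ^ K) ^ 2 := by
  have hx0 : (0:ℝ) ≤ 1 - a := by linarith
  have hx1 : 1 - a ≤ 1 := by linarith
  have hkey := key_ineq (1 - a) hx0 hx1 K
  have hfac : (1 : ℝ) - a ^ 2 = (1 - a) * (2 - (1 - a)) := by ring
  rw [hfac, mul_pow]
  have hxKn : 0 ≤ (1 - a) ^ K := pow_nonneg hx0 K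
  nlinarith [mul_le_mul_of_nonneg_left hkey hxKn]

private lemma swapB (y : ℝ) (h0 : 0 ≤ y) (h1 : y ≤ 1) (M : ℕ) :
    1 - (1 - y ^ M) ^ 2 ≤ (1 - (1 - y) ^ 2) ^ M := by
  have hkey := key_ineq y h0 h1 M
  have hfac : (1 : ℝ) - (1 - y) ^ 2 = y * (2 - y) := by ring
  rw [hfac, mul_pow]
  have hyM : 0 ≤ y ^ M := pow_nonneg h0 M
  nlinarith [mul_le_mul_of_nonneg_left hkey hyM]

private lemma aux_main (b : ℕ → Bool) (Z : ℝ) (hZ0 : 0 ≤ Z) (hZ1 : Z ≤ 1)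
    (z : ℕ → ℝ) (hz0 : z 0 = Z) :
    ∀ n : ℕ, (∀ i ≤ n, 0 ≤ z i ∧ z i ≤ 1) →
      (∀ i < n, b i = true → z (i + 1) = (z i) ^ 2) →
      (∀ i < n, b i = false →
        Real.sqrt (1 - (1 - (z i) ^ 2) ^ 2) ≤ z (i + 1) ∧
          z (i + 1) ≤ 1 - (1 - z i) ^ 2) →
      Real.sqrt (1 - (1 - Z ^ (2 ^ (((Finset.range n).filter (fun i => b i = true)).card + 1))) ^
          (2 ^ (n - ((Finset.range n).filter (fun i => b i = true)).card))) ≤ z n ∧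
        z n ≤ (1 - (1 - Z) ^ (2 ^ (n - ((Finset.range n).filter (fun i => b i = true)).card))) ^
          (2 ^ (((Finset.range n).filter (fun i => b i = true)).card)) := by
  intro n
  induction n with
  | zero =>
    intro _ _ _
    simp only [Finset.range_zero, Finset.filter_empty, Finset.card_empty, Nat.zero_sub,
      pow_zero, pow_one, zero_add]
    have h1 : (1 : ℝ) - (1 - Z ^ 2) = Z ^ 2 := by ring
    rw [h1, Real.sqrt_sq hZ0, hz0]
    constructor <;> linarith
  | succ n ih =>
    intro hzmem hstep1 hstep0
    have hzmem' : ∀ i ≤ n, 0 ≤ z i ∧ z i ≤ 1 := fun i hi => hzmem i (le_trans hi (Nat.le_succ n))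
    have hstep1' : ∀ i < n, b i = true → z (i + 1) = (z i) ^ 2 :=
      fun i hi => hstep1 i (lt_trans hi (Nat.lt_succ_self n))
    have hstep0' : ∀ i < n, b i = false → _ :=
      fun i hi => hstep0 i (lt_trans hi (Nat.lt_succ_self n))
    obtain ⟨hL, hU⟩ := ih hzmem' hstep1' hstep0'
    set m := ((Finset.range n).filter (fun i => b i = true)).card with hmdef
    have hmn : m ≤ n := le_trans (Finset.card_filter_le _ _) (by simp)
    set k := n - m with hkdef
    have hzn0 : 0 ≤ z n := (hzmem n (Nat.le_succ n)).1
    have hzn1 : z n ≤ 1 := (hzmem n (Nat.le_succ n)).2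
    -- useful positivity facts
    have hZ1' : (0:ℝ) ≤ 1 - Z := by linarith
    have hZ1'' : (1:ℝ) - Z ≤ 1 := by linarith
    have hA0 : 0 ≤ Z ^ (2 ^ (m + 1)) := pow_nonneg hZ0 _
    have hA1 : Z ^ (2 ^ (m + 1)) ≤ 1 := pow_le_one₀ hZ0 hZ1
    set A := Z ^ (2 ^ (m + 1)) with hAdef
    have h1A0 : (0:ℝ) ≤ 1 - A := by linarith
    have h1A1 : (1:ℝ) - A ≤ 1 := by linarith
    have ht0 : (0:ℝ) ≤ 1 - (1 - A) ^ (2 ^ k) := by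
      have := pow_le_one₀ h1A0 h1A1 (n := 2 ^ k); linarith
    have hU1 : (1 - (1 - Z) ^ (2 ^ k)) ^ (2 ^ m) ≤ 1 := by
      apply pow_le_one₀
      · have := pow_le_one₀ hZ1' hZ1'' (n := 2 ^ k); linarith
      · have := pow_nonneg hZ1' (2 ^ k); linarith
    have hU0 : 0 ≤ (1 - (1 - Z) ^ (2 ^ k)) ^ (2 ^ m) := by
      apply pow_nonneg
      have := pow_le_one₀ hZ1' hZ1'' (n := 2 ^ k); linarith
    -- the lower bound squared
    have hLsq : 1 - (1 - A) ^ (2 ^ k) ≤ (z n) ^ 2 := by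
      have h1 : Real.sqrt (1 - (1 - A) ^ (2 ^ k)) ^ 2 = 1 - (1 - A) ^ (2 ^ k) :=
        Real.sq_sqrt ht0
      have h2 : Real.sqrt (1 - (1 - A) ^ (2 ^ k)) ^ 2 ≤ (z n) ^ 2 :=
        pow_le_pow_left₀ (Real.sqrt_nonneg _) hL 2
      linarith
    have hcard : ((Finset.range (n + 1)).filter (fun i => b i = true)).card
        = (if b n = true then m + 1 else m) := by
      rw [Finset.range_add_one, Finset.filter_insert]
      split
      · rw [Finset.card_insert_of_notMem (by simp)]
      · rfl
    cases hb : b n with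
    | true =>
      rw [hcard, if_pos hb]
      have hsub : n + 1 - (m + 1) = k := by omega
      rw [hsub]
      have hz1 : z (n + 1) = (z n) ^ 2 := hstep1 n (Nat.lt_succ_self n) hb
      constructor
      · -- lower bound
        have hswap := swapA A hA0 hA1 (2 ^ k)
        have hA2 : A ^ 2 = Z ^ (2 ^ (m + 1 + 1)) := by
          rw [hAdef, ← pow_mul, ← pow_succ]
        rw [hz1]
        calc Real.sqrt (1 - (1 - Z ^ 2 ^ (m + 1 + 1)) ^ 2 ^ k)
            ≤ Real.sqrt ((1 - (1 - A) ^ (2 ^ k)) ^ 2) := by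
              apply Real.sqrt_le_sqrt
              rw [← hA2]; exact hswap
          _ = 1 - (1 - A) ^ (2 ^ k) := Real.sqrt_sq ht0
          _ ≤ (z n) ^ 2 := hLsq
      · -- upper bound
        rw [hz1]
        have := pow_le_pow_left₀ hzn0 hU 2
        calc (z n) ^ 2 ≤ ((1 - (1 - Z) ^ (2 ^ k)) ^ (2 ^ m)) ^ 2 := this
          _ = (1 - (1 - Z) ^ (2 ^ k)) ^ (2 ^ (m + 1)) := by
              rw [← pow_mul, ← pow_succ]
    | false =>
      rw [hcard, if_neg (by simp [hb])]
      have hsub : n + 1 - m = k + 1 := by omega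
      rw [hsub]
      obtain ⟨h0L, h0U⟩ := hstep0 n (Nat.lt_succ_self n) hb
      constructor
      · -- lower bound
        have h1 : (1 : ℝ) - (z n) ^ 2 ≤ (1 - A) ^ (2 ^ k) := by linarith
        have h2 : (0:ℝ) ≤ 1 - (z n) ^ 2 := by nlinarith
        have h3 : ((1:ℝ) - (z n) ^ 2) ^ 2 ≤ ((1 - A) ^ (2 ^ k)) ^ 2 :=
          pow_le_pow_left₀ h2 h1 2
        have h4 : ((1 - A) ^ (2 ^ k)) ^ 2 = (1 - A) ^ (2 ^ (k + 1)) := by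
          rw [← pow_mul, ← pow_succ]
        calc Real.sqrt (1 - (1 - Z ^ 2 ^ (m + 1)) ^ 2 ^ (k + 1))
            ≤ Real.sqrt (1 - (1 - (z n) ^ 2) ^ 2) := by
              apply Real.sqrt_le_sqrt
              rw [← hAdef, ← h4]; linarith
          _ ≤ z (n + 1) := h0L
      · -- upper bound
        have h1 : (0:ℝ) ≤ 1 - (1 - (1 - Z) ^ (2 ^ k)) ^ (2 ^ m) := by linarith
        have h2 : (1:ℝ) - (1 - (1 - Z) ^ (2 ^ k)) ^ (2 ^ m) ≤ 1 - z n := by linarith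
        have h3 : ((1:ℝ) - z n) ^ 2 ≥ (1 - (1 - (1 - Z) ^ (2 ^ k)) ^ (2 ^ m)) ^ 2 :=
          pow_le_pow_left₀ h1 h2 2
        have hy0 : (0:ℝ) ≤ 1 - (1 - Z) ^ (2 ^ k) := by
          have := pow_le_one₀ hZ1' hZ1'' (n := 2 ^ k); linarith
        have hy1 : (1:ℝ) - (1 - Z) ^ (2 ^ k) ≤ 1 := by
          have := pow_nonneg hZ1' (2 ^ k); linarith
        have hswap := swapB (1 - (1 - Z) ^ (2 ^ k)) hy0 hy1 (2 ^ m)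
        have he : ((1:ℝ) - (1 - (1 - Z) ^ (2 ^ k))) ^ 2 = (1 - Z) ^ (2 ^ (k + 1)) := by
          have : (1:ℝ) - (1 - (1 - Z) ^ (2 ^ k)) = (1 - Z) ^ (2 ^ k) := by ring
          rw [this, ← pow_mul, ← pow_succ]
        rw [he] at hswap
        calc z (n + 1) ≤ 1 - (1 - z n) ^ 2 := h0U
          _ ≤ 1 - (1 - (1 - (1 - Z) ^ (2 ^ k)) ^ (2 ^ m)) ^ 2 := by linarith
          _ ≤ (1 - (1 - Z) ^ (2 ^ (k + 1))) ^ (2 ^ m) := hswap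

/-- Extremal bounds on iterated Bhattacharyya transforms for a general
binary-input memoryless channel: along the binary word `b`, a '1' step squares
the Bhattacharyya parameter exactly, while a '0' step yields a value between
√(1 - (1 - z²)²) and 1 - (1 - z)². -/
theorem bhattacharyya_iter_bounds (n : ℕ) (b : ℕ → Bool) (m : ℕ)
    (hm : m = ((Finset.range n).filter (fun i => b i = true)).card)
    (Z : ℝ) (hZ0 : 0 ≤ Z) (hZ1 : Z ≤ 1)
    (z : ℕ → ℝ) (hz0 : z 0 = Z)
    (hzmem : ∀ i ≤ n, 0 ≤ z i ∧ z i ≤ 1)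
    (hstep1 : ∀ i < n, b i = true → z (i + 1) = (z i) ^ 2)
    (hstep0 : ∀ i < n, b i = false →
      Real.sqrt (1 - (1 - (z i) ^ 2) ^ 2) ≤ z (i + 1) ∧
        z (i + 1) ≤ 1 - (1 - z i) ^ 2) :
    Real.sqrt (1 - (1 - Z ^ (2 ^ (m + 1))) ^ (2 ^ (n - m))) ≤ z n ∧
      z n ≤ (1 - (1 - Z) ^ (2 ^ (n - m))) ^ (2 ^ m) := by
  subst hm
  exact aux_main b Z hZ0 hZ1 z hz0 n hzmem hstep1 hstep0
end

section
/- Subset selection with small pairwise correlations: let A ≥ 2 be a natural number, T ∈ ℝ, and R : Fin A → Fin A → ℝ satisfy R i j = R j i, R i i = 1, and 0 ≤ R i j ≤ 1 for all i, j, together with Σ_{i,j} R i j ≤ T. Then for every natural number M with 2 ≤ M ≤ A there exists a subset S ⊆ Fin A with |S| = M such that R i j ≤ (M(M−1)/2) · T / A² for all distinct i, j ∈ S. -/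
/-!
Average over all `M`-subsets `S` of the indices. Each ordered pair `(i, j)` with `i ≠ j` lies in
`C(A-2, M-2)` of the `C(A, M)` subsets, so some `S` has off-diagonal sum `∑_{i ≠ j ∈ S} R i j` at
most `C(M,2) / C(A,2)` times the off-diagonal total `Σ - A`, where `Σ = ∑ R i j`. By symmetry and
nonnegativity, each `R i j` with `i ≠ j` in `S` is at most half that sum, i.e. at most
`C(M,2) (Σ - A) / (A (A - 1))`, and this is at most `C(M,2) Σ / A²` because `Σ ≤ A²`.
-/

open Finset

section DoubleCounting

variable {α β : Type*} [DecidableEq α]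

theorem card_filter_powersetCard_mem_offDiag (s : Finset α) {k : ℕ} (hk : 2 ≤ k)
    {p : α × α} (hp : p ∈ s.offDiag) :
    #{S ∈ powersetCard k s | p ∈ S.offDiag} = (#s - 2).choose (k - 2) := by
  obtain ⟨ha, hb, hab⟩ := mem_offDiag.1 hp
  have hpair : #{p.1, p.2} = 2 := card_pair hab
  rw [← hpair, ← card_filter_powersetCard_subset _ s k
    (insert_subset ha (singleton_subset_iff.2 hb)) (hpair ▸ hk)]
  congr 1
  exact filter_congr fun S _ => by simp [mem_offDiag, insert_subset_iff, hab]

theorem sum_powersetCard_sum_offDiag [AddCommMonoid β] (s : Finset α) {k : ℕ} (hk : 2 ≤ k)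
    (f : α × α → β) :
    ∑ S ∈ powersetCard k s, ∑ p ∈ S.offDiag, f p =
      (#s - 2).choose (k - 2) • ∑ p ∈ s.offDiag, f p := by
  rw [sum_comm' (t' := s.offDiag) (s' := fun p => {S ∈ powersetCard k s | p ∈ S.offDiag}),
    smul_sum]
  · exact sum_congr rfl fun p hp => by
      rw [sum_const, card_filter_powersetCard_mem_offDiag s hk hp]
  · intro S p
    rw [mem_filter]
    exact ⟨fun h => ⟨h, offDiag_mono (mem_powersetCard.1 h.1).1 h.2⟩, And.left⟩

theorem exists_mem_powersetCard_choose_smul_sum_offDiag_le [AddCommMonoid β] [LinearOrder β]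
    [IsOrderedAddMonoid β] (s : Finset α) {k : ℕ} (hk : 2 ≤ k) (hks : k ≤ #s)
    (f : α × α → β) :
    ∃ S ∈ powersetCard k s,
      (#s).choose k • ∑ p ∈ S.offDiag, f p ≤ (#s - 2).choose (k - 2) • ∑ p ∈ s.offDiag, f p := by
  obtain ⟨S, hS, hmin⟩ := (powersetCard k s).exists_min_image (fun S => ∑ p ∈ S.offDiag, f p)
    (powersetCard_nonempty.2 hks)
  refine ⟨S, hS, ?_⟩
  calc (#s).choose k • ∑ p ∈ S.offDiag, f p
      = #(powersetCard k s) • ∑ p ∈ S.offDiag, f p := by rw [card_powersetCard]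
    _ ≤ ∑ T ∈ powersetCard k s, ∑ p ∈ T.offDiag, f p := card_nsmul_le_sum _ _ _ hmin
    _ = _ := sum_powersetCard_sum_offDiag s hk f

end DoubleCounting

section OffDiag

variable {α β : Type*} [DecidableEq α] [AddCommMonoid β]

theorem sum_sum_eq_sum_add_sum_offDiag (s : Finset α) (f : α → α → β) :
    ∑ i ∈ s, ∑ j ∈ s, f i j = ∑ i ∈ s, f i i + ∑ p ∈ s.offDiag, f p.1 p.2 := by
  rw [← sum_product', ← diag_union_offDiag, sum_union (disjoint_diag_offDiag s), diag, sum_map]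
  rfl

theorem add_swap_le_sum_offDiag [PartialOrder β] [IsOrderedAddMonoid β] {s : Finset α}
    {f : α × α → β} (hf : ∀ p ∈ s.offDiag, 0 ≤ f p) {a b : α} (ha : a ∈ s) (hb : b ∈ s)
    (hab : a ≠ b) :
    f (a, b) + f (b, a) ≤ ∑ p ∈ s.offDiag, f p := by
  rw [← sum_pair (by simp [hab] : (a, b) ≠ (b, a))]
  refine sum_le_sum_of_subset_of_nonneg ?_ fun p hp _ => hf p hp
  simp [insert_subset_iff, ha, hb, hab, hab.symm]

end OffDiag

theorem le_choose_two_mul_div_sq_of_choose_mul_le {n k : ℕ} (hk : 2 ≤ k) (hkn : k ≤ n)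
    {r x total : ℝ} (hr : 2 * r ≤ x)
    (havg : n.choose k * x ≤ (n - 2).choose (k - 2) * (total - n)) (htotal : total ≤ n ^ 2) :
    r ≤ k.choose 2 * total / (n : ℝ) ^ 2 := by
  have hk2 : (0 : ℝ) ≤ k.choose 2 := Nat.cast_nonneg _
  have hc : (0 : ℝ) < (n - 2).choose (k - 2) := by exact_mod_cast Nat.choose_pos (by omega)
  have hchoose : (n.choose k * k.choose 2 : ℝ) = n.choose 2 * (n - 2).choose (k - 2) := by
    exact_mod_cast Nat.choose_mul hk
  have hcancel : (n : ℝ) * (n - 1) * r ≤ k.choose 2 * (total - n) := by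
    refine le_of_mul_le_mul_left ?_ hc
    calc ((n - 2).choose (k - 2) : ℝ) * (n * (n - 1) * r)
        = k.choose 2 * (n.choose k * (2 * r)) := by
          rw [mul_left_comm, ← mul_assoc _ (n.choose k : ℝ), mul_comm _ (n.choose k : ℝ),
            hchoose, Nat.cast_choose_two]
          ring
      _ ≤ k.choose 2 * ((n - 2).choose (k - 2) * (total - n)) :=
          mul_le_mul_of_nonneg_left
            ((mul_le_mul_of_nonneg_left hr (Nat.cast_nonneg _)).trans havg) hk2
      _ = _ := by ring
  have hn : (2 : ℝ) ≤ n := by exact_mod_cast hk.trans hkn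
  rw [le_div_iff₀ (by positivity)]
  -- Multiply `hcancel` by `n / (n - 1)`; `n * (total - n) ≤ (n - 1) * total` because `total ≤ n ^ 2`.
  nlinarith [mul_le_mul_of_nonneg_left htotal hk2]

theorem exists_card_eq_forall_le_choose_two_mul_sum_div_sq {ι : Type*} [Fintype ι]
    [DecidableEq ι] {R : ι → ι → ℝ} (hsymm : ∀ i j, R i j = R j i) (hdiag : ∀ i, R i i = 1)
    (hbd : ∀ i j, 0 ≤ R i j ∧ R i j ≤ 1) {k : ℕ} (hk : 2 ≤ k) (hkn : k ≤ Fintype.card ι) :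
    ∃ S : Finset ι, #S = k ∧ ∀ i ∈ S, ∀ j ∈ S, i ≠ j →
      R i j ≤ k.choose 2 * (∑ i, ∑ j, R i j) / (Fintype.card ι : ℝ) ^ 2 := by
  obtain ⟨S, hS, havg⟩ := exists_mem_powersetCard_choose_smul_sum_offDiag_le univ hk
    (by rwa [card_univ]) (fun p => R p.1 p.2)
  simp only [card_univ, nsmul_eq_mul] at havg
  refine ⟨S, (mem_powersetCard.1 hS).2, fun i hi j hj hij => ?_⟩
  have hpair : 2 * R i j ≤ ∑ p ∈ S.offDiag, R p.1 p.2 := by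
    simpa [hsymm j i, two_mul] using
      add_swap_le_sum_offDiag (f := fun p => R p.1 p.2) (fun p _ => (hbd _ _).1) hi hj hij
  have hoff : ∑ p ∈ univ.offDiag, R p.1 p.2 = (∑ i, ∑ j, R i j) - Fintype.card ι := by
    rw [sum_sum_eq_sum_add_sum_offDiag univ R]
    simp [hdiag]
  have htotal : ∑ i, ∑ j, R i j ≤ (Fintype.card ι : ℝ) ^ 2 :=
    calc ∑ i, ∑ j, R i j ≤ ∑ _i : ι, ∑ _j : ι, (1 : ℝ) :=
          sum_le_sum fun i _ => sum_le_sum fun j _ => (hbd i j).2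
      _ = (Fintype.card ι : ℝ) ^ 2 := by simp [sq]
  exact le_choose_two_mul_div_sq_of_choose_mul_le hk hkn hpair (hoff ▸ havg) htotal

theorem exists_subset_small_correlations_general (A : ℕ) (T : ℝ)
    (R : Fin A → Fin A → ℝ)
    (hsymm : ∀ i j, R i j = R j i) (hdiag : ∀ i, R i i = 1)
    (hbd : ∀ i j, 0 ≤ R i j ∧ R i j ≤ 1)
    (hsum : ∑ i : Fin A, ∑ j : Fin A, R i j ≤ T)
    (M : ℕ) (hM2 : 2 ≤ M) (hMA : M ≤ A) :
    ∃ S : Finset (Fin A), S.card = M ∧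
      ∀ i ∈ S, ∀ j ∈ S, i ≠ j →
        R i j ≤ (M : ℝ) * ((M : ℝ) - 1) / 2 * T / (A : ℝ) ^ 2 := by
  obtain ⟨S, hcard, hS⟩ := exists_card_eq_forall_le_choose_two_mul_sum_div_sq hsymm hdiag hbd hM2
    (by rwa [Fintype.card_fin])
  refine ⟨S, hcard, fun i hi j hj hij => (hS i hi j hj hij).trans ?_⟩
  rw [Fintype.card_fin, ← Nat.cast_choose_two]
  gcongr

/-- Subset selection with small pairwise correlations: from an A×A correlation
matrix with total sum at most T, one can extract M indices whose pairwise
correlations are all at most C(M,2)·T/A². -/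
theorem exists_subset_small_correlations (A : ℕ) (hA : 2 ≤ A) (T : ℝ)
    (R : Fin A → Fin A → ℝ)
    (hsymm : ∀ i j, R i j = R j i) (hdiag : ∀ i, R i i = 1)
    (hbd : ∀ i j, 0 ≤ R i j ∧ R i j ≤ 1)
    (hsum : ∑ i : Fin A, ∑ j : Fin A, R i j ≤ T)
    (M : ℕ) (hM2 : 2 ≤ M) (hMA : M ≤ A) :
    ∃ S : Finset (Fin A), S.card = M ∧
      ∀ i ∈ S, ∀ j ∈ S, i ≠ j →
        R i j ≤ (M : ℝ) * ((M : ℝ) - 1) / 2 * T / (A : ℝ) ^ 2 :=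
  exists_subset_small_correlations_general A T R hsymm hdiag hbd hsum M hM2 hMA
end
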